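/- arXiv:2410.09939 — 3 statements merged into one kernel-verified Lean document; each statement's English description precedes it below -/
import Mathlib

section
/- Let $R$ be a commutative ring and $G$ a graph. If $A$ is a degenerate singular $n$-cube in $G$ (i.e. $\delta_j^- A = \delta_j^+ A$ for some $j$), then $\partial_n(A)$ lies in the $R$-submodule of $\mathcal{L}_{n-1}(G)$ generated by the degenerate singular $(n-1)$-cubes. -/
/-- Adjacency (with loops) in the hypercube graph `Q^n`. -/
def QAdj {n : ℕ} (x y : Fin n → Bool) : Prop := {j | x j ≠ y j}.Subsingleton

/-- A graph map between graphs given by their adjacency relations. -/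
def IsGraphMap {V W : Type*} (E : V → V → Prop) (F : W → W → Prop) (f : V → W) : Prop :=
  ∀ a b, E a b → F (f a) (f b)

/-- Singular `n`-cubes in the graph `(V, E)`. -/
def Cube (V : Type*) (E : V → V → Prop) (n : ℕ) :=
  {A : (Fin n → Bool) → V // IsGraphMap QAdj E A}

lemma qadj_insertNth {n : ℕ} (i : Fin (n + 1)) (ε : Bool) {x y : Fin n → Bool}
    (h : QAdj x y) : QAdj (i.insertNth ε x) (i.insertNth ε y) := by
  intro a ha b hb
  have hai : a ≠ i := by
    intro hh; subst hh; simp [Set.mem_setOf_eq, Fin.insertNth_apply_same] at ha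
  have hbi : b ≠ i := by
    intro hh; subst hh; simp [Set.mem_setOf_eq, Fin.insertNth_apply_same] at hb
  obtain ⟨a', rfl⟩ := Fin.exists_succAbove_eq hai
  obtain ⟨b', rfl⟩ := Fin.exists_succAbove_eq hbi
  simp only [Set.mem_setOf_eq, Fin.insertNth_apply_succAbove] at ha hb
  exact congrArg i.succAbove (h ha hb)

/-- The face map `δᵢ^ε` on singular cubes. -/
def faceCube {V : Type*} {E : V → V → Prop} {n : ℕ} (i : Fin (n + 1)) (ε : Bool)
    (A : Cube V E (n + 1)) : Cube V E n :=
  ⟨fun x => A.1 (i.insertNth ε x), fun a b hab => A.2 _ _ (qadj_insertNth i ε hab)⟩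

/-- A singular cube is degenerate if, for some coordinate `i`, its value does not
depend on the `i`-th coordinate (equivalently, `δᵢ⁻ A = δᵢ⁺ A`). -/
def IsDegen {V : Type*} {E : V → V → Prop} {n : ℕ} (B : Cube V E n) : Prop :=
  ∃ i : Fin n, ∀ x : Fin n → Bool,
    B.1 (Function.update x i false) = B.1 (Function.update x i true)

/-- The boundary map `∂ : 𝓛_{n+1}(G) → 𝓛_n(G)`. -/
noncomputable def boundary (V : Type*) (E : V → V → Prop) (R : Type*) [CommRing R]
    (n : ℕ) : (Cube V E (n + 1) →₀ R) →ₗ[R] (Cube V E n →₀ R) :=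
  Finsupp.lift (Cube V E n →₀ R) R (Cube V E (n + 1)) fun A =>
    ∑ i : Fin (n + 1), ((-1 : R) ^ ((i : ℕ) + 1)) •
      (Finsupp.single (faceCube i false A) (1 : R) -
        Finsupp.single (faceCube i true A) (1 : R))

section Degenerate

variable {V : Type*} {E : V → V → Prop} {n : ℕ} {A : Cube V E (n + 1)} {j : Fin (n + 1)}

lemma faceCube_false_eq_true_of_degen
    (hj : ∀ x, A.1 (Function.update x j false) = A.1 (Function.update x j true)) :
    faceCube j false A = faceCube j true A :=
  Subtype.ext <| funext fun x => by
    simpa [faceCube, Fin.update_insertNth] using hj (j.insertNth false x)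

lemma isDegen_faceCube_of_ne
    (hj : ∀ x, A.1 (Function.update x j false) = A.1 (Function.update x j true))
    {i : Fin (n + 1)} (hij : i ≠ j) (ε : Bool) : IsDegen (faceCube i ε A) := by
  obtain ⟨j', rfl⟩ := Fin.exists_succAbove_eq hij.symm
  refine ⟨j', fun x => ?_⟩
  simp only [faceCube, Fin.insertNth_update]
  exact hj _

end Degenerate

lemma boundary_single_one {V : Type*} (E : V → V → Prop) (R : Type*) [CommRing R] (n : ℕ)
    (A : Cube V E (n + 1)) :
    boundary V E R n (Finsupp.single A 1) =
      ∑ i : Fin (n + 1), ((-1 : R) ^ ((i : ℕ) + 1)) •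
        (Finsupp.single (faceCube i false A) (1 : R) -
          Finsupp.single (faceCube i true A) (1 : R)) := by
  simp [boundary]

theorem stmt8_general {V : Type*} (E : V → V → Prop)
    (R : Type*) [CommRing R] (n : ℕ) (A : Cube V E (n + 1)) (hA : IsDegen A) :
    boundary V E R n (Finsupp.single A 1) ∈
      Submodule.span R
        ((fun B => Finsupp.single B (1 : R)) '' {B : Cube V E n | IsDegen B}) := by
  obtain ⟨j, hj⟩ := hA
  rw [boundary_single_one]
  refine Submodule.sum_mem _ fun i _ => Submodule.smul_mem _ _ ?_
  by_cases hij : i = j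
  · subst hij
    rw [faceCube_false_eq_true_of_degen hj, sub_self]
    exact Submodule.zero_mem _
  · exact Submodule.sub_mem _ (Submodule.subset_span ⟨_, isDegen_faceCube_of_ne hj hij _, rfl⟩)
      (Submodule.subset_span ⟨_, isDegen_faceCube_of_ne hj hij _, rfl⟩)

/-- The boundary of a degenerate singular cube lies in the submodule generated by
the degenerate singular cubes of one dimension lower. -/
theorem stmt8 {V : Type*} (E : V → V → Prop)
    (hrefl : ∀ v, E v v) (hsymm : ∀ a b, E a b → E b a)
    (R : Type*) [CommRing R] (n : ℕ) (A : Cube V E (n + 1)) (hA : IsDegen A) :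
    boundary V E R n (Finsupp.single A 1) ∈
      Submodule.span R
        ((fun B => Finsupp.single B (1 : R)) '' {B : Cube V E n | IsDegen B}) :=
  stmt8_general E R n A hA
end

section
/- Let $G$ be a graph and $v \in G_V$ a vertex such that there exists $w \ne v$ with $N(v) \subseteq N(w)$, where $N(v) = \{x : v \sim x\}$. Let $G'$ be the induced subgraph on $G_V \setminus \{v\}$. Then the inclusion $i : G' \hookrightarrow G$ is a graph homotopy equivalence: there is a graph map $f : G \to G'$ with $f \circ i = \mathrm{id}_{G'}$ and a graph map $H : G \square I_1 \to G$ with $H(-,0) = i \circ f$ and $H(-,1) = \mathrm{id}_G$. -/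
/-- If `v` is homotopically removable (there is `w ≠ v` with `N(v) ⊆ N(w)`), then the
inclusion of the induced subgraph on `G_V \ {v}` is a homotopy equivalence: there is a
graph map `f : G → G'` with `f ∘ i = id` and a one-step homotopy
`H : G □ I₁ → G` from `i ∘ f` to `id`. -/
theorem stmt12 {V : Type*} (E : V → V → Prop)
    (hrefl : ∀ v, E v v) (hsymm : ∀ a b, E a b → E b a)
    (v w : V) (hw : w ≠ v) (hN : ∀ x, E v x → E w x) :
    IsGraphMap (fun a b : {x : V // x ≠ v} => E a.1 b.1) E (fun a => a.1) ∧
    ∃ f : V → {x : V // x ≠ v},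
      IsGraphMap E (fun a b : {x : V // x ≠ v} => E a.1 b.1) f ∧
      (∀ x : {x : V // x ≠ v}, f x.1 = x) ∧
      ∃ H : V × Bool → V,
        IsGraphMap
          (fun p q : V × Bool => p.1 = q.1 ∨ (E p.1 q.1 ∧ p.2 = q.2)) E H ∧
        (∀ x : V, H (x, false) = (f x).1) ∧ (∀ x : V, H (x, true) = x) := by
  classical
  refine ⟨fun a b h => h, ?_⟩
  set g : V → V := fun x => if x = v then w else x with hg
  have hgE : ∀ a b, E a b → E (g a) (g b) := by
    intro a b h
    by_cases ha : a = v <;> by_cases hb : b = v <;>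
      simp only [hg] <;> simp [ha, hb] at h ⊢
    · exact hrefl w
    · exact hN b h
    · exact hsymm _ _ (hN a (hsymm _ _ h))
    · exact h
  have hgne : ∀ x, g x ≠ v := by
    intro x
    by_cases hx : x = v <;> simp [hg, hx, hw]
  have hgadj : ∀ a, E a (g a) := by
    intro a
    by_cases ha : a = v
    · simp only [hg, ha, if_pos rfl]
      exact hsymm _ _ (hN v (hrefl v))
    · simp only [hg, if_neg ha]
      exact hrefl a
  refine ⟨fun x => ⟨g x, hgne x⟩, fun a b h => hgE a b h, ?_, ?_⟩
  · intro x; ext; simp [hg, x.2]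
  · refine ⟨fun p => if p.2 then p.1 else g p.1, ?_, by simp, by simp⟩
    rintro ⟨a, i⟩ ⟨b, j⟩ (h | ⟨h, hij⟩)
    · dsimp at h; subst h
      cases i <;> cases j <;> simp
      · exact hrefl (g a)
      · exact hsymm _ _ (hgadj a)
      · exact hgadj a
      · exact hrefl a
    · dsimp at hij; subst hij
      cases i <;> simp
      · exact hgE a b h
      · exact h
end

section
/- Let $G$ be a graph with a degree-2 vertex $v$ adjacent to distinct vertices $x$ and $y$ (and no other vertices), where $x$ and $y$ are adjacent in $G$. Then $v$ is homotopically removable: the induced subgraph $G'$ on $G_V \setminus \{v\}$ is graph-homotopy-equivalent to $G$. -/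
/-- Adjacency in the path graph `I_m` on the vertices `0, …, m` (with loops). -/
def pathAdj (m : ℕ) (a b : Fin (m + 1)) : Prop :=
  a.val = b.val ∨ a.val + 1 = b.val ∨ b.val + 1 = a.val

/-- The box product of two graphs. -/
def boxAdj {V W : Type*} (E : V → V → Prop) (F : W → W → Prop) :
    V × W → V × W → Prop :=
  fun p q => (p.1 = q.1 ∧ F p.2 q.2) ∨ (E p.1 q.1 ∧ p.2 = q.2)

/-- `f` and `g` are homotopic graph maps. -/
def GraphHomotopic {V W : Type*} (E : V → V → Prop) (F : W → W → Prop)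
    (f g : V → W) : Prop :=
  ∃ (m : ℕ) (H : V × Fin (m + 1) → W),
    IsGraphMap (boxAdj E (pathAdj m)) F H ∧
    (∀ x, H (x, 0) = f x) ∧ (∀ x, H (x, Fin.last m) = g x)

/-- If `v` is a degree-2 vertex adjacent (only) to distinct vertices `x` and `y`,
and `x ∼ y`, then `v` is homotopically removable: the induced subgraph on
`G_V \ {v}` is graph-homotopy-equivalent to `G`. -/
theorem stmt15 {V : Type*} (E : V → V → Prop)
    (hrefl : ∀ u, E u u) (hsymm : ∀ a b, E a b → E b a)
    (v x y : V) (hvx : v ≠ x) (hvy : v ≠ y) (hxy : x ≠ y)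
    (hex : E v x) (hey : E v y) (hexy : E x y)
    (hdeg : ∀ u, E v u → u = v ∨ u = x ∨ u = y) :
    ∃ (f : {u : V // u ≠ v} → V) (g : V → {u : V // u ≠ v}),
      IsGraphMap (fun a b : {u : V // u ≠ v} => E a.1 b.1) E f ∧
      IsGraphMap E (fun a b : {u : V // u ≠ v} => E a.1 b.1) g ∧
      GraphHomotopic (fun a b : {u : V // u ≠ v} => E a.1 b.1)
        (fun a b : {u : V // u ≠ v} => E a.1 b.1) (g ∘ f) id ∧
      GraphHomotopic E E (f ∘ g) id := by
  classical
  set f : {u : V // u ≠ v} → V := fun u => u.1 with hf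
  set g : V → {u : V // u ≠ v} := fun u =>
    if h : u = v then ⟨x, hvx.symm⟩ else ⟨u, h⟩ with hg
  have gv : ∀ u, f (g u) = if u = v then x else u := by
    intro u; by_cases h : u = v <;> simp [hg, hf, h]
  have key : ∀ a b, E a b → E (f (g a)) (f (g b)) := by
    intro a b hab
    rw [gv, gv]
    by_cases ha : a = v <;> by_cases hb : b = v <;> simp only [ha, hb, if_pos, if_neg, ite_true, ite_false]
    · exact hrefl x
    · rcases hdeg b (ha ▸ hab) with h | h | h
      · exact absurd h hb
      · rw [h]; exact hrefl x
      · rw [h]; exact hexy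
    · rcases hdeg a (hsymm _ _ (hb ▸ hab)) with h | h | h
      · exact absurd h ha
      · rw [h]; exact hrefl x
      · rw [h]; exact hsymm _ _ hexy
    · exact hab
  have hgf : ∀ u : {u : V // u ≠ v}, g (f u) = u := by
    intro u; simp [hg, hf, u.2]
  refine ⟨f, g, ?_, ?_, ?_, ?_⟩
  · intro a b h; exact h
  · intro a b h; exact key a b h
  · refine ⟨0, fun p => g (f p.1), ?_, fun u => by simp [hgf], fun u => by simp [hgf]⟩
    rintro ⟨a, s⟩ ⟨b, t⟩ hab
    rcases hab with ⟨h1, -⟩ | ⟨h1, -⟩ <;> dsimp only at h1 ⊢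
    · rw [h1]; exact key _ _ (hrefl _)
    · exact key _ _ h1
  · refine ⟨1, fun p => if p.2 = 0 then f (g p.1) else p.1, ?_, ?_, ?_⟩
    · rintro ⟨a, s⟩ ⟨b, t⟩ hab
      have step : ∀ c d : V, E c d → ∀ s t : Fin 2,
          E (if s = 0 then f (g c) else c) (if t = 0 then f (g d) else d) := by
        intro c d hcd s t
        have h1 : E (f (g c)) d := by
          rw [gv]
          by_cases hc : c = v
          · rcases hdeg d (hc ▸ hcd) with h | h | h
            · rw [h, hc, if_pos rfl]; exact hsymm _ _ hex
            · rw [h, if_pos hc]; exact hrefl x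
            · rw [h, if_pos hc]; exact hexy
          · rw [if_neg hc]; exact hcd
        have h2 : E c (f (g d)) := by
          rw [gv]
          by_cases hd : d = v
          · rcases hdeg c (hsymm _ _ (hd ▸ hcd)) with h | h | h
            · rw [h, hd, if_pos rfl]; exact hex
            · rw [h, if_pos hd]; exact hrefl x
            · rw [h, if_pos hd]; exact hsymm _ _ hexy
          · rw [if_neg hd]; exact hcd
        by_cases hs : s = 0 <;> by_cases ht : t = 0 <;>
          simp only [hs, ht, if_pos, if_neg, ite_true, ite_false]
        · exact key _ _ hcd
        · exact h1
        · exact h2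
        · exact hcd
      rcases hab with ⟨h1, -⟩ | ⟨h1, -⟩ <;> dsimp only at h1 ⊢
      · rw [h1]; exact step _ _ (hrefl _) s t
      · exact step _ _ h1 s t
    · intro u; simp
    · intro u; simp [Fin.last]
end
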